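/- Let C be a category with all morphisms monic. Any two ind-objects of C that are both universal and homogeneous (equivalently, universal and f-injective) are isomorphic as ind-objects. -/

import Mathlib

open CategoryTheory

universe u v

/-- An ind-object of a category `C`: a sequential diagram `X₁ → X₂ → ⋯` in `C`. -/
structure IndObject (C : Type u) [Category.{v} C] where
  obj : ℕ → C
  map : ∀ n : ℕ, obj n ⟶ obj (n + 1)

namespace IndObject

variable {C : Type u} [Category.{v} C]

/-- The transition morphism `obj n ⟶ obj m` of an ind-object, for `n ≤ m`. -/
def trans (Ω : IndObject C) : ∀ {n m : ℕ}, n ≤ m → (Ω.obj n ⟶ Ω.obj m) :=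
  fun {n m} h =>
    Nat.leRecOn (C := fun m => Ω.obj n ⟶ Ω.obj m) h (fun {l} g => g ≫ Ω.map l) (𝟙 _)

/-- An ind-object is universal if every object of `C` embeds into it. -/
def Universal (Ω : IndObject C) : Prop :=
  ∀ X : C, ∃ n : ℕ, Nonempty (X ⟶ Ω.obj n)

/-- An ind-object is f-injective if every embedding of an object of `C` into it extends
along any morphism of `C`. -/
def FInjective (Ω : IndObject C) : Prop :=
  ∀ ⦃X Y : C⦄ (α : X ⟶ Y) (n : ℕ) (γ : X ⟶ Ω.obj n),
    ∃ (m : ℕ) (h : n ≤ m) (β : Y ⟶ Ω.obj m), α ≫ β = γ ≫ Ω.trans h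

end IndObject


/-- An isomorphism of ind-objects: compatible families of morphisms in both directions
whose composites are the transition maps. -/
structure IndIso {C : Type u} [Category.{v} C] (Ω Ω' : IndObject C) where
  a : ℕ → ℕ
  b : ℕ → ℕ
  amono : Monotone a
  bmono : Monotone b
  fwd : ∀ n : ℕ, Ω.obj n ⟶ Ω'.obj (a n)
  bwd : ∀ n : ℕ, Ω'.obj n ⟶ Ω.obj (b n)
  fwd_comm : ∀ {n m : ℕ} (h : n ≤ m), Ω.trans h ≫ fwd m = fwd n ≫ Ω'.trans (amono h)
  bwd_comm : ∀ {n m : ℕ} (h : n ≤ m), Ω'.trans h ≫ bwd m = bwd n ≫ Ω.trans (bmono h)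
  le_ba : ∀ n : ℕ, n ≤ b (a n)
  le_ab : ∀ n : ℕ, n ≤ a (b n)
  fwd_bwd : ∀ n : ℕ, fwd n ≫ bwd (a n) = Ω.trans (le_ba n)
  bwd_fwd : ∀ n : ℕ, bwd n ≫ fwd (b n) = Ω'.trans (le_ab n)

/-!
Back and forth. Universality of `Ω'` gives a morphism `Ω.obj 0 ⟶ Ω'.obj m₀`. F-injectivity of
`Ω`, applied to the identity of `Ω.obj n` along `f : Ω.obj n ⟶ Ω'.obj m`, yields `g` going back
with `f ≫ g` a transition map; f-injectivity of `Ω'` applied to `g` yields the next `f`. Iterating,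
and pushing the indices past `k` at step `k`, gives a cofinal zigzag with commuting triangles.
Composing the triangles shows that the `f`s and the `g`s commute with the transition maps, so the
zigzag is an isomorphism of ind-objects.
-/

namespace IndObject

variable {C : Type u} [Category.{v} C]

@[simp]
theorem trans_refl (Ω : IndObject C) {n : ℕ} (h : n ≤ n) : Ω.trans h = 𝟙 _ :=
  Nat.leRecOn_self _

theorem trans_succ (Ω : IndObject C) {n m : ℕ} (h : n ≤ m) (h' : n ≤ m + 1) :
    Ω.trans h' = Ω.trans h ≫ Ω.map m :=
  Nat.leRecOn_succ h _

@[simp]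
theorem trans_comp_trans (Ω : IndObject C) {n m k : ℕ} (h₁ : n ≤ m) (h₂ : m ≤ k) :
    Ω.trans h₁ ≫ Ω.trans h₂ = Ω.trans (h₁.trans h₂) := by
  induction k, h₂ using Nat.le_induction with
  | base => simp
  | succ k hk ih => rw [trans_succ Ω hk, trans_succ Ω (h₁.trans hk), ← Category.assoc, ih]

@[simp]
theorem trans_comp_trans_assoc (Ω : IndObject C) {n m k : ℕ} (h₁ : n ≤ m) (h₂ : m ≤ k)
    {Z : C} (φ : Ω.obj k ⟶ Z) :
    Ω.trans h₁ ≫ Ω.trans h₂ ≫ φ = Ω.trans (h₁.trans h₂) ≫ φ := by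
  rw [← Category.assoc, trans_comp_trans]

theorem FInjective.exists_comp_eq_trans {Ω : IndObject C} (hΩ : Ω.FInjective) {n : ℕ} {Y : C}
    (α : Ω.obj n ⟶ Y) (N : ℕ) :
    ∃ (m : ℕ) (h : n ≤ m) (β : Y ⟶ Ω.obj m), N ≤ m ∧ α ≫ β = Ω.trans h := by
  obtain ⟨m, h, β, hβ⟩ := hΩ α n (𝟙 _)
  refine ⟨max m N, h.trans (le_max_left m N), β ≫ Ω.trans (le_max_left m N),
    le_max_right m N, ?_⟩
  rw [← Category.assoc, hβ, Category.id_comp, trans_comp_trans]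

/-- A cofinal zigzag `Ω.obj (n 0) ⟶ Ω'.obj (m 0) ⟶ Ω.obj (n 1) ⟶ Ω'.obj (m 1) ⟶ ⋯` whose
triangles with the transition maps commute. -/
structure BackAndForth (Ω Ω' : IndObject C) where
  n : ℕ → ℕ
  m : ℕ → ℕ
  f : ∀ k, Ω.obj (n k) ⟶ Ω'.obj (m k)
  g : ∀ k, Ω'.obj (m k) ⟶ Ω.obj (n (k + 1))
  n_le_succ : ∀ k, n k ≤ n (k + 1)
  m_le_succ : ∀ k, m k ≤ m (k + 1)
  f_comp_g : ∀ k, f k ≫ g k = Ω.trans (n_le_succ k)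
  g_comp_f : ∀ k, g k ≫ f (k + 1) = Ω'.trans (m_le_succ k)
  self_le_n : ∀ k, k ≤ n k
  self_le_m : ∀ k, k ≤ m k

namespace BackAndForth

variable {Ω Ω' : IndObject C} (z : BackAndForth Ω Ω')

theorem monotone_n : Monotone z.n := monotone_nat_of_le_succ z.n_le_succ

theorem monotone_m : Monotone z.m := monotone_nat_of_le_succ z.m_le_succ

theorem trans_comp_f {k l : ℕ} (h : k ≤ l) :
    Ω.trans (z.monotone_n h) ≫ z.f l = z.f k ≫ Ω'.trans (z.monotone_m h) := by
  induction l, h using Nat.le_induction with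
  | base => simp
  | succ l hl ih =>
    calc Ω.trans (z.monotone_n (hl.trans l.le_succ)) ≫ z.f (l + 1)
        = Ω.trans (z.monotone_n hl) ≫ z.f l ≫ z.g l ≫ z.f (l + 1) := by
          rw [← Category.assoc (z.f l), z.f_comp_g, trans_comp_trans_assoc]
      _ = z.f k ≫ Ω'.trans (z.monotone_m (hl.trans l.le_succ)) := by
          rw [z.g_comp_f, ← Category.assoc, ih, Category.assoc, trans_comp_trans]

theorem trans_comp_g {k l : ℕ} (h : k ≤ l) :
    Ω'.trans (z.monotone_m h) ≫ z.g l = z.g k ≫ Ω.trans (z.monotone_n (Nat.succ_le_succ h)) := by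
  induction l, h using Nat.le_induction with
  | base => simp
  | succ l hl ih =>
    calc Ω'.trans (z.monotone_m (hl.trans l.le_succ)) ≫ z.g (l + 1)
        = Ω'.trans (z.monotone_m hl) ≫ z.g l ≫ z.f (l + 1) ≫ z.g (l + 1) := by
          rw [← Category.assoc (z.g l), z.g_comp_f, trans_comp_trans_assoc]
      _ = z.g k ≫ Ω.trans (z.monotone_n (Nat.succ_le_succ (hl.trans l.le_succ))) := by
          rw [z.f_comp_g, ← Category.assoc, ih, Category.assoc, trans_comp_trans]

def toIndIso : IndIso Ω Ω' where
  a := z.m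
  b k := z.n (k + 1)
  amono := z.monotone_m
  bmono _ _ h := z.monotone_n (Nat.succ_le_succ h)
  fwd k := Ω.trans (z.self_le_n k) ≫ z.f k
  bwd k := Ω'.trans (z.self_le_m k) ≫ z.g k
  fwd_comm h := by
    rw [trans_comp_trans_assoc, Category.assoc, ← z.trans_comp_f h, trans_comp_trans_assoc]
  bwd_comm h := by
    rw [trans_comp_trans_assoc, Category.assoc, ← z.trans_comp_g h, trans_comp_trans_assoc]
  le_ba k := (z.self_le_m k).trans ((z.self_le_n _).trans (z.n_le_succ _))
  le_ab k := k.le_succ.trans ((z.self_le_n _).trans (z.self_le_m _))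
  fwd_bwd k := by
    simp only [Category.assoc]
    rw [← Category.assoc (z.f k), ← z.trans_comp_f (z.self_le_m k), Category.assoc, z.f_comp_g,
      trans_comp_trans_assoc, trans_comp_trans]
  bwd_fwd k := by
    simp only [Category.assoc]
    rw [z.trans_comp_f (z.self_le_n (k + 1)), ← Category.assoc (z.g k), z.g_comp_f,
      trans_comp_trans_assoc, trans_comp_trans]

end BackAndForth

structure Stage (Ω Ω' : IndObject C) where
  n : ℕ
  m : ℕ
  f : Ω.obj n ⟶ Ω'.obj m

theorem Stage.exists_next {Ω Ω' : IndObject C} (hΩ : Ω.FInjective) (hΩ' : Ω'.FInjective)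
    (s : Stage Ω Ω') (N : ℕ) :
    ∃ (t : Stage Ω Ω') (hn : s.n ≤ t.n) (hm : s.m ≤ t.m) (g : Ω'.obj s.m ⟶ Ω.obj t.n),
      N ≤ t.n ∧ N ≤ t.m ∧ s.f ≫ g = Ω.trans hn ∧ g ≫ t.f = Ω'.trans hm := by
  obtain ⟨n', hn, g, hNn, hfg⟩ := hΩ.exists_comp_eq_trans s.f N
  obtain ⟨m', hm, f', hNm, hgf⟩ := hΩ'.exists_comp_eq_trans g N
  exact ⟨⟨n', m', f'⟩, hn, hm, g, hNn, hNm, hfg, hgf⟩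

theorem BackAndForth.nonempty {Ω Ω' : IndObject C} (hΩ : Ω.FInjective) (hΩ' : Ω'.FInjective)
    (s₀ : Stage Ω Ω') : Nonempty (BackAndForth Ω Ω') := by
  choose next hn hm g hNn hNm hfg hgf using Stage.exists_next hΩ hΩ'
  let s : ℕ → Stage Ω Ω' := fun k => Nat.rec s₀ (fun k t => next t (k + 1)) k
  exact ⟨{
    n := fun k => (s k).n
    m := fun k => (s k).m
    f := fun k => (s k).f
    g := fun k => g (s k) (k + 1)
    n_le_succ := fun k => hn (s k) (k + 1)
    m_le_succ := fun k => hm (s k) (k + 1)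
    f_comp_g := fun k => hfg (s k) (k + 1)
    g_comp_f := fun k => hgf (s k) (k + 1)
    self_le_n := fun | 0 => Nat.zero_le _ | k + 1 => hNn (s k) (k + 1)
    self_le_m := fun | 0 => Nat.zero_le _ | k + 1 => hNm (s k) (k + 1) }⟩

end IndObject

theorem stmt_12_general (C : Type u) [Category.{v} C]
    (Ω Ω' : IndObject C)
    (hfinj : Ω.FInjective)
    (huniv' : Ω'.Universal) (hfinj' : Ω'.FInjective) :
    Nonempty (IndIso Ω Ω') := by
  obtain ⟨m₀, ⟨f₀⟩⟩ := huniv' (Ω.obj 0)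
  obtain ⟨z⟩ := IndObject.BackAndForth.nonempty hfinj hfinj' ⟨0, m₀, f₀⟩
  exact ⟨z.toIndIso⟩

/-- any two universal f-injective (equivalently, universal homogeneous)
ind-objects of a category with all morphisms monic are isomorphic as ind-objects. -/
theorem stmt_12 (C : Type u) [Category.{v} C]
    (hmono : ∀ {X Y : C} (f : X ⟶ Y), Mono f)
    (Ω Ω' : IndObject C)
    (huniv : Ω.Universal) (hfinj : Ω.FInjective)
    (huniv' : Ω'.Universal) (hfinj' : Ω'.FInjective) :
    Nonempty (IndIso Ω Ω') :=
  stmt_12_general C Ω Ω' hfinj huniv' hfinj'
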